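/- Let K ⊆ S^{n−1} be a compact C¹ submanifold (e.g., a smooth knot in S³ when n = 4). Then the cone Tr(K) = {t·v : v ∈ K, 0 ≤ t ≤ 1} over K with vertex at the origin is Lipschitz normally embedded at 0. -/

import Mathlib

/-!
Near each of its points, `K` is the zero set of a `C¹` map with surjective differential, so the
implicit function theorem parametrizes it by a ball in `ker f'` through a Lipschitz map with a
Lipschitz left inverse; images of segments are then paths in `K` from `v` to `w` of length
`≤ C ‖v - w‖`, and compactness makes `C` uniform for `‖v - w‖ < δ`. In the cone, `t • v` is joined
to `s • w` by the radial segment to `s • v` followed by the scaled path `s • γ` when `v` and `w`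
are close, and through the vertex otherwise. Since `v` and `w` are unit vectors, `|t - s|`,
`s ‖v - w‖` and, when `‖v - w‖ ≥ δ`, also `t + s` are `O(‖t • v - s • w‖)`.
-/

/-- The inner (length) distance on a subset `X ⊆ ℝⁿ`. -/
noncomputable def innerDist {n : ℕ} (X : Set (EuclideanSpace ℝ (Fin n)))
    (x y : EuclideanSpace ℝ (Fin n)) : ENNReal :=
  ⨅ γ : {γ : ℝ → EuclideanSpace ℝ (Fin n) //
      γ 0 = x ∧ γ 1 = y ∧ ContinuousOn γ (Set.Icc 0 1) ∧ ∀ t ∈ Set.Icc (0:ℝ) 1, γ t ∈ X},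
    eVariationOn γ.1 (Set.Icc 0 1)

/-- The truncated cone `Tr(K) = {t·v : v ∈ K, 0 ≤ t ≤ 1}` over `K` with vertex `0`. -/
def coneOver {n : ℕ} (K : Set (EuclideanSpace ℝ (Fin n))) : Set (EuclideanSpace ℝ (Fin n)) :=
  {z | ∃ t ∈ Set.Icc (0:ℝ) 1, ∃ v ∈ K, z = t • v}

open Set Metric Filter Topology
open scoped NNReal Pointwise

def LipschitzJoinedIn {E : Type*} [PseudoMetricSpace E] (F : Set E) (C : ℝ≥0) (x y : E) :
    Prop :=
  ∃ γ : ℝ → E, γ 0 = x ∧ γ 1 = y ∧ MapsTo γ (Icc 0 1) F ∧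
    LipschitzOnWith (C * nndist x y) γ (Icc 0 1)

namespace LipschitzJoinedIn

variable {E : Type*}

theorem mono [PseudoMetricSpace E] {F G : Set E} {C D : ℝ≥0} {x y : E}
    (h : LipschitzJoinedIn F C x y) (hFG : F ⊆ G) (hCD : C ≤ D) : LipschitzJoinedIn G D x y :=
  let ⟨γ, h0, h1, hF, hγ⟩ := h
  ⟨γ, h0, h1, hF.mono_right hFG, hγ.weaken (mul_le_mul_left hCD _)⟩

theorem const_smul [SeminormedAddCommGroup E] [NormedSpace ℝ E] {F : Set E} {C : ℝ≥0} {x y : E}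
    (h : LipschitzJoinedIn F C x y) (c : ℝ) : LipschitzJoinedIn (c • F) C (c • x) (c • y) := by
  obtain ⟨γ, h0, h1, hF, hγ⟩ := h
  refine ⟨fun u ↦ c • γ u, by simp [h0], by simp [h1], fun u hu ↦ smul_mem_smul_set (hF hu), ?_⟩
  rw [nndist_smul₀, mul_left_comm]
  exact (lipschitzWith_smul c).comp_lipschitzOnWith hγ

end LipschitzJoinedIn

theorem lipschitzJoinedIn_of_segment_subset {E : Type*} [SeminormedAddCommGroup E]
    [NormedSpace ℝ E] {F : Set E} {x y : E} (h : segment ℝ x y ⊆ F) :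
    LipschitzJoinedIn F 1 x y := by
  refine ⟨AffineMap.lineMap x y, by simp, by simp, ?_, ?_⟩
  · rw [segment_eq_image_lineMap] at h
    exact (mapsTo_image _ _).mono_right h
  · rw [one_mul]
    exact (lipschitzWith_lineMap x y).lipschitzOnWith

section innerDist

variable {n : ℕ} {X : Set (EuclideanSpace ℝ (Fin n))} {x y z : EuclideanSpace ℝ (Fin n)}

theorem innerDist_le_of_lipschitzJoinedIn {C : ℝ≥0} (h : LipschitzJoinedIn X C x y) :
    innerDist X x y ≤ ENNReal.ofReal (C * ‖x - y‖) := by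
  obtain ⟨γ, h0, h1, hX, hγ⟩ := h
  have hvar : eVariationOn (id : ℝ → ℝ) (Icc 0 1) = 1 := by simp
  calc innerDist X x y ≤ eVariationOn γ (Icc 0 1) :=
        iInf_le_of_le ⟨γ, h0, h1, hγ.continuousOn, hX⟩ le_rfl
    _ ≤ (C * nndist x y : ℝ≥0) * eVariationOn id (Icc 0 1) :=
        hγ.comp_eVariationOn_le (mapsTo_id _)
    _ = ENNReal.ofReal (C * ‖x - y‖) := by
        rw [hvar, mul_one, ← dist_eq_norm, ← coe_nndist, ← NNReal.coe_mul,
          ENNReal.ofReal_coe_nnreal]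

theorem innerDist_triangle : innerDist X x z ≤ innerDist X x y + innerDist X y z := by
  refine ENNReal.le_iInf_add_iInf fun ⟨γ₁, h₁0, h₁1, h₁c, h₁X⟩ ⟨γ₂, h₂0, h₂1, h₂c, h₂X⟩ ↦ ?_
  set γ : ℝ → EuclideanSpace ℝ (Fin n) := fun u ↦ if u ≤ 1 / 2 then γ₁ (2 * u) else γ₂ (2 * u - 1)
  have hIcc₁ : (fun u : ℝ ↦ 2 * u) '' Icc 0 (1 / 2) = Icc 0 1 := by
    rw [image_mul_left_Icc (by norm_num) (by norm_num)]; norm_num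
  have hIcc₂ : (fun u : ℝ ↦ 2 * u - 1) '' Icc (1 / 2) 1 = Icc 0 1 := by
    ext u; constructor
    · rintro ⟨v, ⟨hv₁, hv₂⟩, rfl⟩; constructor <;> linarith
    · rintro ⟨hu₁, hu₂⟩; exact ⟨(u + 1) / 2, ⟨by linarith, by linarith⟩, by ring⟩
  have heq₁ : EqOn γ (γ₁ ∘ fun u ↦ 2 * u) (Icc 0 (1 / 2)) := fun u hu ↦ if_pos hu.2
  have heq₂ : EqOn γ (γ₂ ∘ fun u ↦ 2 * u - 1) (Icc (1 / 2) 1) := by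
    intro u ⟨hu, _⟩
    rcases hu.eq_or_lt with rfl | hu
    · simp [γ, h₁1, ← h₂0]
    · exact if_neg (not_le.2 hu)
  have hmono₁ : Monotone fun u : ℝ ↦ 2 * u := fun a b h ↦ by dsimp; linarith
  have hmono₂ : Monotone fun u : ℝ ↦ 2 * u - 1 := fun a b h ↦ by dsimp; linarith
  have hmaps₁ : MapsTo (fun u : ℝ ↦ 2 * u) (Icc 0 (1 / 2)) (Icc 0 1) := by
    rw [← hIcc₁]; exact mapsTo_image _ _
  have hmaps₂ : MapsTo (fun u : ℝ ↦ 2 * u - 1) (Icc (1 / 2) 1) (Icc 0 1) := by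
    rw [← hIcc₂]; exact mapsTo_image _ _
  have hcont : ContinuousOn γ (Icc 0 1) := by
    rw [← Icc_union_Icc_eq_Icc (by norm_num : (0 : ℝ) ≤ 1 / 2) (by norm_num)]
    refine ContinuousOn.union_of_isClosed ?_ ?_ isClosed_Icc isClosed_Icc
    · refine ContinuousOn.congr ?_ heq₁
      exact h₁c.comp (by fun_prop) hmaps₁
    · refine ContinuousOn.congr ?_ heq₂
      exact h₂c.comp (by fun_prop) hmaps₂
  refine iInf_le_of_le ⟨γ, ?_, ?_, hcont, ?_⟩ (le_of_eq ?_)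
  · simp [γ, h₁0]
  · norm_num [γ, h₂1]
  · intro u hu
    rcases le_total u (1 / 2) with h | h
    · rw [heq₁ ⟨hu.1, h⟩]; exact h₁X _ (hmaps₁ ⟨hu.1, h⟩)
    · rw [heq₂ ⟨h, hu.2⟩]; exact h₂X _ (hmaps₂ ⟨h, hu.2⟩)
  · have := eVariationOn.Icc_add_Icc γ (s := univ) (by norm_num : (0 : ℝ) ≤ 1 / 2)
      (by norm_num : (1 / 2 : ℝ) ≤ 1) (mem_univ _)
    simp only [univ_inter] at this
    rw [← this, eVariationOn.eq_of_eqOn heq₁, eVariationOn.eq_of_eqOn heq₂,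
      eVariationOn.comp_eq_of_monotoneOn _ _ (hmono₁.monotoneOn _),
      eVariationOn.comp_eq_of_monotoneOn _ _ (hmono₂.monotoneOn _), hIcc₁, hIcc₂]

end innerDist

theorem lipschitzJoinedIn_of_parametrization {E G : Type*} [PseudoMetricSpace E]
    [SeminormedAddCommGroup G] [NormedSpace ℝ G] {K : Set E} {B : Set G} {φ : G → E} {κ : E → G}
    {M L : ℝ≥0} (hB : Convex ℝ B) (hφ : LipschitzOnWith M φ B) (hφK : MapsTo φ B K)
    (hκ : LipschitzWith L κ) {v w : E} (hv : κ v ∈ B) (hw : κ w ∈ B) (hφv : φ (κ v) = v)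
    (hφw : φ (κ w) = w) : LipschitzJoinedIn K (M * L) v w := by
  have hseg : MapsTo (AffineMap.lineMap (κ v) (κ w)) (Icc (0 : ℝ) 1) B := by
    have := hB.segment_subset hv hw
    rw [segment_eq_image_lineMap] at this
    exact (mapsTo_image _ _).mono_right this
  refine ⟨φ ∘ AffineMap.lineMap (κ v) (κ w), by simpa using hφv, by simpa using hφw,
    hφK.comp hseg, ?_⟩
  refine (hφ.comp (lipschitzWith_lineMap _ _).lipschitzOnWith hseg).weaken ?_
  rw [mul_assoc]
  gcongr
  exact hκ.nndist_le v w

theorem HasStrictFDerivAt.exists_ball_lipschitzJoinedIn {E F : Type*} [NormedAddCommGroup E]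
    [NormedSpace ℝ E] [CompleteSpace E] [NormedAddCommGroup F] [NormedSpace ℝ F]
    [FiniteDimensional ℝ F] {K U : Set E} {f : E → F} {f' : E →L[ℝ] F} {a : E}
    (hf : HasStrictFDerivAt f f' a) (hf' : f'.range = ⊤) (hU : U ∈ 𝓝 a)
    (hKU : ∀ y ∈ U, y ∈ K ↔ f y = 0) (ha : a ∈ K) :
    ∃ r > 0, ∃ C, ∀ v ∈ K ∩ ball a r, ∀ w ∈ K ∩ ball a r, LipschitzJoinedIn K C v w := by
  have := FiniteDimensional.complete ℝ F
  have hker := f'.ker_closedComplemented_of_finiteDimensional_range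
  set φ := hf.implicitFunctionOfComplemented f f' hf' hker (f a)
  -- `x ↦ P (x - a)` is the second coordinate of the implicit-function chart at `a`.
  set P := Classical.choose hker
  have hφ : HasStrictFDerivAt φ f'.ker.subtypeL 0 := hf.to_implicitFunctionOfComplemented hf' hker
  have hφ0 : φ 0 = a := hf.implicitFunctionOfComplemented_apply_image hf' hker
  obtain ⟨M, s, hs, hφM⟩ := hφ.exists_lipschitzOnWith
  have hfa : f a = 0 := (hKU a (mem_of_mem_nhds hU)).1 ha
  have hW : ∀ᶠ z in 𝓝 (0 : f'.ker), z ∈ s ∧ φ z ∈ K := by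
    have hlevel : ∀ᶠ z in 𝓝 (0 : f'.ker), f (φ z) = f a :=
      (tendsto_const_nhds.prodMk_nhds tendsto_id).eventually
        (hf.map_implicitFunctionOfComplemented_eq hf' hker)
    have hφU : ∀ᶠ z in 𝓝 (0 : f'.ker), φ z ∈ U :=
      hφ.continuousAt.preimage_mem_nhds (by rwa [hφ0])
    filter_upwards [hs, hlevel, hφU] with z hzs hz hzU using ⟨hzs, (hKU _ hzU).2 (hz.trans hfa)⟩
  obtain ⟨ρ, hρ, hρW⟩ := Metric.eventually_nhds_iff_ball.1 hW
  have hV : ∀ᶠ x in 𝓝 a, x ∈ K → φ (P (x - a)) = x ∧ P (x - a) ∈ ball 0 ρ := by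
    have hP : Tendsto (fun x ↦ P (x - a)) (𝓝 a) (𝓝 0) := by
      simpa only [Function.comp_def, sub_self, map_zero]
        using (P.continuous.comp (continuous_sub_right a)).tendsto a
    filter_upwards [hU, hf.eq_implicitFunctionOfComplemented hf' hker, hP (ball_mem_nhds 0 hρ)]
      with x hxU hx hxρ hxK
    have hfx : f x = f a := ((hKU x hxU).1 hxK).trans hfa.symm
    rw [hfx] at hx
    exact ⟨hx, hxρ⟩
  obtain ⟨r, hr, hrV⟩ := Metric.eventually_nhds_iff_ball.1 hV
  have hκ : LipschitzWith ‖P‖₊ fun x ↦ P (x - a) :=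
    LipschitzWith.of_dist_le_mul fun x y ↦ by simpa using P.lipschitz.dist_le_mul (x - a) (y - a)
  refine ⟨r, hr, M * ‖P‖₊, fun v ⟨hvK, hv⟩ w ⟨hwK, hw⟩ ↦ ?_⟩
  obtain ⟨hvφ, hvρ⟩ := hrV v hv hvK
  obtain ⟨hwφ, hwρ⟩ := hrV w hw hwK
  exact lipschitzJoinedIn_of_parametrization (convex_ball 0 ρ)
    (hφM.mono fun z hz ↦ (hρW z hz).1) (fun z hz ↦ (hρW z hz).2) hκ hvρ hwρ hvφ hwφ

theorem IsCompact.exists_lipschitzJoinedIn_of_dist_lt {E : Type*} [PseudoMetricSpace E]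
    {K : Set E} (hK : IsCompact K)
    (hloc : ∀ a ∈ K, ∃ r > 0, ∃ C, ∀ v ∈ K ∩ ball a r, ∀ w ∈ K ∩ ball a r,
      LipschitzJoinedIn K C v w) :
    ∃ δ > 0, ∃ C, ∀ v ∈ K, ∀ w ∈ K, dist v w < δ → LipschitzJoinedIn K C v w := by
  choose! r hr C hC using hloc
  obtain ⟨t, htK, hcover⟩ :=
    hK.elim_nhds_subcover (fun a ↦ ball a (r a)) fun a ha ↦ ball_mem_nhds a (hr a ha)
  rw [← Finset.set_biUnion_coe, biUnion_eq_iUnion] at hcover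
  obtain ⟨δ, hδ, hδcover⟩ := lebesgue_number_lemma_of_metric hK (fun _ ↦ isOpen_ball) hcover
  refine ⟨δ, hδ, t.sup C, fun v hv w hw hvw ↦ ?_⟩
  obtain ⟨⟨a, ha⟩, hball⟩ := hδcover v hv
  exact (hC a (htK a ha) v ⟨hv, hball (mem_ball_self hδ)⟩ w ⟨hw, hball (mem_ball'.2 hvw)⟩).mono
    subset_rfl (Finset.le_sup ha)

section UnitVectors

variable {E : Type*} [SeminormedAddCommGroup E] [NormedSpace ℝ E] {v w : E} {s t : ℝ}

theorem abs_sub_le_norm_smul_sub_smul (hv : ‖v‖ = 1) (hw : ‖w‖ = 1) (ht : 0 ≤ t) (hs : 0 ≤ s) :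
    |t - s| ≤ ‖t • v - s • w‖ := by
  simpa [norm_smul, hv, hw, abs_of_nonneg ht, abs_of_nonneg hs]
    using abs_norm_sub_norm_le (t • v) (s • w)

theorem mul_norm_sub_le_two_mul_norm_smul_sub_smul (hv : ‖v‖ = 1) (hw : ‖w‖ = 1) (ht : 0 ≤ t)
    (hs : 0 ≤ s) : s * ‖v - w‖ ≤ 2 * ‖t • v - s • w‖ := by
  have := abs_sub_le_norm_smul_sub_smul hv hw ht hs
  calc s * ‖v - w‖ = ‖s • v - s • w‖ := by rw [← smul_sub, norm_smul, Real.norm_of_nonneg hs]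
    _ ≤ ‖s • v - t • v‖ + ‖t • v - s • w‖ := norm_sub_le_norm_sub_add_norm_sub _ _ _
    _ = |t - s| + ‖t • v - s • w‖ := by
        rw [← sub_smul, norm_smul, hv, mul_one, Real.norm_eq_abs, abs_sub_comm]
    _ ≤ 2 * ‖t • v - s • w‖ := by linarith

theorem add_le_mul_norm_smul_sub_smul (hv : ‖v‖ = 1) (hw : ‖w‖ = 1) (ht : 0 ≤ t) (hs : 0 ≤ s)
    {δ : ℝ} (hδ : 0 < δ) (hvw : δ ≤ ‖v - w‖) : t + s ≤ (1 + 4 / δ) * ‖t • v - s • w‖ := by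
  have hts := abs_sub_le_norm_smul_sub_smul hv hw ht hs
  have hs' : s ≤ 2 / δ * ‖t • v - s • w‖ := by
    rw [div_mul_eq_mul_div, le_div_iff₀ hδ]
    nlinarith [mul_norm_sub_le_two_mul_norm_smul_sub_smul hv hw ht hs]
  have hexp : (1 + 4 / δ) * ‖t • v - s • w‖ = ‖t • v - s • w‖ + 2 * (2 / δ * ‖t • v - s • w‖) := by
    ring
  linarith [le_abs_self (t - s)]

end UnitVectors

section coneOver

variable {n : ℕ} {K : Set (EuclideanSpace ℝ (Fin n))} {s t : ℝ}

theorem smul_subset_coneOver (hs : s ∈ Icc (0 : ℝ) 1) : s • K ⊆ coneOver K := by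
  rintro _ ⟨v, hv, rfl⟩
  exact ⟨s, hs, v, hv, rfl⟩

theorem segment_smul_subset_coneOver {v : EuclideanSpace ℝ (Fin n)} (hv : v ∈ K)
    (ht : t ∈ Icc (0 : ℝ) 1) (hs : s ∈ Icc (0 : ℝ) 1) : segment ℝ (t • v) (s • v) ⊆ coneOver K := by
  rintro _ ⟨a, b, ha, hb, hab, rfl⟩
  exact ⟨a * t + b * s, convex_Icc (0 : ℝ) 1 ht hs ha hb hab, v, hv, by
    rw [smul_smul, smul_smul, add_smul]⟩

variable {v w : EuclideanSpace ℝ (Fin n)}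

theorem innerDist_coneOver_le_of_lipschitzJoinedIn (hKs : K ⊆ sphere 0 1) (hv : v ∈ K)
    (hw : w ∈ K) (ht : t ∈ Icc (0 : ℝ) 1) (hs : s ∈ Icc (0 : ℝ) 1) {C : ℝ≥0}
    (h : LipschitzJoinedIn K C v w) :
    innerDist (coneOver K) (t • v) (s • w) ≤ ENNReal.ofReal ((1 + 2 * C) * ‖t • v - s • w‖) := by
  have hv1 : ‖v‖ = 1 := by simpa using hKs hv
  have hw1 : ‖w‖ = 1 := by simpa using hKs hw
  calc innerDist (coneOver K) (t • v) (s • w)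
        ≤ innerDist (coneOver K) (t • v) (s • v) + innerDist (coneOver K) (s • v) (s • w) :=
          innerDist_triangle
    _ ≤ ENNReal.ofReal (1 * ‖t • v - s • v‖) + ENNReal.ofReal (C * ‖s • v - s • w‖) :=
        add_le_add
          (innerDist_le_of_lipschitzJoinedIn
            (lipschitzJoinedIn_of_segment_subset (segment_smul_subset_coneOver hv ht hs)))
          (innerDist_le_of_lipschitzJoinedIn
            ((h.const_smul s).mono (smul_subset_coneOver hs) le_rfl))
    _ ≤ ENNReal.ofReal ((1 + 2 * C) * ‖t • v - s • w‖) := by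
        rw [← ENNReal.ofReal_add (by positivity) (by positivity)]
        refine ENNReal.ofReal_le_ofReal ?_
        rw [← sub_smul, ← smul_sub, norm_smul, norm_smul, hv1, Real.norm_eq_abs,
          Real.norm_of_nonneg hs.1]
        have := abs_sub_le_norm_smul_sub_smul hv1 hw1 ht.1 hs.1
        have := mul_norm_sub_le_two_mul_norm_smul_sub_smul hv1 hw1 ht.1 hs.1
        nlinarith [C.2]

theorem innerDist_coneOver_le_of_le_norm_sub (hKs : K ⊆ sphere 0 1) (hv : v ∈ K) (hw : w ∈ K)
    (ht : t ∈ Icc (0 : ℝ) 1) (hs : s ∈ Icc (0 : ℝ) 1) {δ : ℝ} (hδ : 0 < δ) (hvw : δ ≤ ‖v - w‖) :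
    innerDist (coneOver K) (t • v) (s • w) ≤ ENNReal.ofReal ((1 + 4 / δ) * ‖t • v - s • w‖) := by
  have hv1 : ‖v‖ = 1 := by simpa using hKs hv
  have hw1 : ‖w‖ = 1 := by simpa using hKs hw
  have hsegv : segment ℝ (t • v) 0 ⊆ coneOver K := by
    simpa using segment_smul_subset_coneOver hv ht ⟨le_rfl, zero_le_one⟩
  have hsegw : segment ℝ 0 (s • w) ⊆ coneOver K := by
    simpa using segment_smul_subset_coneOver hw ⟨le_rfl, zero_le_one⟩ hs
  calc innerDist (coneOver K) (t • v) (s • w)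
        ≤ innerDist (coneOver K) (t • v) 0 + innerDist (coneOver K) 0 (s • w) :=
          innerDist_triangle
    _ ≤ ENNReal.ofReal (1 * ‖t • v - 0‖) + ENNReal.ofReal (1 * ‖0 - s • w‖) :=
        add_le_add (innerDist_le_of_lipschitzJoinedIn (lipschitzJoinedIn_of_segment_subset hsegv))
          (innerDist_le_of_lipschitzJoinedIn (lipschitzJoinedIn_of_segment_subset hsegw))
    _ ≤ ENNReal.ofReal ((1 + 4 / δ) * ‖t • v - s • w‖) := by
        rw [← ENNReal.ofReal_add (by positivity) (by positivity)]
        refine ENNReal.ofReal_le_ofReal ?_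
        rw [sub_zero, zero_sub, norm_neg, norm_smul, norm_smul, hv1, hw1,
          Real.norm_of_nonneg ht.1, Real.norm_of_nonneg hs.1, one_mul, mul_one, one_mul, mul_one]
        exact add_le_mul_norm_smul_sub_smul hv1 hw1 ht.1 hs.1 hδ hvw

end coneOver

/-- If `K ⊆ Sⁿ⁻¹` is a compact `C¹` submanifold (of some dimension `d`, expressed by local
`C¹` defining functions with surjective differential), then the cone over `K` with vertex at
the origin is Lipschitz normally embedded at `0`. -/
theorem cone_over_smooth_compact_LNE_at_zero {n d : ℕ}
    (K : Set (EuclideanSpace ℝ (Fin n)))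
    (hKs : K ⊆ Metric.sphere 0 1) (hK : IsCompact K)
    (hsub : ∀ x ∈ K, ∃ (U : Set (EuclideanSpace ℝ (Fin n)))
      (f : EuclideanSpace ℝ (Fin n) → EuclideanSpace ℝ (Fin (n - d))),
      IsOpen U ∧ x ∈ U ∧ ContDiff ℝ 1 f ∧ (∀ y ∈ U, (y ∈ K ↔ f y = 0)) ∧
      Function.Surjective (fderiv ℝ f x)) :
    ∃ (U : Set (EuclideanSpace ℝ (Fin n))) (C : ℝ),
      U ∈ nhds (0 : EuclideanSpace ℝ (Fin n)) ∧ 1 ≤ C ∧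
      ∀ x ∈ coneOver K ∩ U, ∀ y ∈ coneOver K ∩ U,
        innerDist (coneOver K ∩ U) x y ≤ ENNReal.ofReal (C * ‖x - y‖) := by
  obtain ⟨δ, hδ, C₀, hC₀⟩ := hK.exists_lipschitzJoinedIn_of_dist_lt fun a ha ↦ by
    obtain ⟨U, f, hU, haU, hf, hKU, hsurj⟩ := hsub a ha
    exact (hf.contDiffAt.hasStrictFDerivAt one_ne_zero).exists_ball_lipschitzJoinedIn
      (LinearMap.range_eq_top.2 hsurj) (hU.mem_nhds haU) hKU ha
  refine ⟨univ, 1 + 2 * C₀ + 4 / δ, univ_mem,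
    by linarith [show 0 ≤ 2 * (C₀ : ℝ) + 4 / δ by positivity], ?_⟩
  rintro _ ⟨⟨t, ht, v, hv, rfl⟩, -⟩ _ ⟨⟨s, hs, w, hw, rfl⟩, -⟩
  rw [inter_univ]
  rcases lt_or_ge (dist v w) δ with hvw | hvw
  · refine (innerDist_coneOver_le_of_lipschitzJoinedIn hKs hv hw ht hs
      (hC₀ v hv w hw hvw)).trans (ENNReal.ofReal_le_ofReal ?_)
    gcongr ?_ * _
    exact le_add_of_nonneg_right (by positivity)
  · refine (innerDist_coneOver_le_of_le_norm_sub hKs hv hw ht hs hδ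
      (by rwa [← dist_eq_norm])).trans (ENNReal.ofReal_le_ofReal ?_)
    gcongr ?_ * _
    linarith [C₀.2]
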